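/- In the two-point ambiguity model, let 𝐩 < 0 and let 𝐪 satisfy 1/𝐩 + 1/𝐪 = 1 (so 0 < 𝐪 < 1). Define h(x) := ((1 − x^𝐪 p^{1−𝐪}) / (1−p)^{1−𝐪})^{1/𝐪} for x ∈ [0, q₁ᵇ], where q₁ᵇ := p^{1/𝐩}. Then inf { G(q₁, q₂) : q₁, q₂ ≥ 0 and (q₁/p)^𝐪 p + (q₂/(1−p))^𝐪 (1−p) ≥ 1 } = inf { G(q₁, h(q₁)) : 0 ≤ q₁ ≤ q₁ᵇ }, and there exists q₁* ∈ [0, q₁ᵇ] such that (q₁*, h(q₁*)) attains the infimum on the left-hand side; in particular, at the optimum the constraint holds with equality. -/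

import Mathlib

/-!
`G` is continuous and increasing in each argument: its integrand is a nonnegative combination
of positive likelihoods raised to the power `γ > 0`, dominated by Gaussian moments. Every
feasible point `(q₁, q₂)` lies coordinatewise above a point of the curve `q₂ = h(q₁)`,
`0 ≤ q₁ ≤ p^{1/𝐩}`: for `q₁ ≤ p^{1/𝐩}` the constraint forces `q₂ ≥ h(q₁)`, and otherwise
`(p^{1/𝐩}, h(p^{1/𝐩})) = (p^{1/𝐩}, 0)` lies below. So the infimum over the feasible set is the
minimum of the continuous function `x ↦ G(x, h(x))` on a compact interval.
-/

open MeasureTheory Real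

/-- Density of the `N(0, T·I_d)` distribution on `ℝ^d`. -/
noncomputable def gaussDensity (d : ℕ) (T : ℝ) (z : Fin d → ℝ) : ℝ :=
  (2 * π * T) ^ (-(d : ℝ) / 2) * Real.exp (-(∑ i, z i ^ 2) / (2 * T))

/-- Likelihood factor `L_T(ϑ, z) = exp(⟨z, ϑ⟩ - ½‖ϑ‖²T)`. -/
noncomputable def likelihood (d : ℕ) (T : ℝ) (ϑ z : Fin d → ℝ) : ℝ :=
  Real.exp ((∑ i, z i * ϑ i) - (∑ i, ϑ i ^ 2) * T / 2)

/-- `G(q₁, q₂) = ∫ (q₁ L_T(ϑ̄, z) + q₂ L_T(ϑ̲, z))^γ φ_T(z) dz`. -/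
noncomputable def Gfun (d : ℕ) (T γ : ℝ) (ϑb ϑl : Fin d → ℝ) (q₁ q₂ : ℝ) : ℝ :=
  ∫ z : Fin d → ℝ,
    (q₁ * likelihood d T ϑb z + q₂ * likelihood d T ϑl z) ^ γ * gaussDensity d T z

/-- `h(x) = ((1 - x^Q p^{1-Q}) / (1-p)^{1-Q})^{1/Q}`, solving the dual constraint
`(x/p)^Q p + (h(x)/(1-p))^Q (1-p) = 1` for the second coordinate. -/
noncomputable def hAdj (p Q x : ℝ) : ℝ :=
  ((1 - x ^ Q * p ^ (1 - Q)) / (1 - p) ^ (1 - Q)) ^ (1 / Q)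

lemma norm_mul_add_mul_rpow_mul_le {a b x y u M γ : ℝ} (hx : 0 ≤ x) (hy : 0 ≤ y) (hγ : 0 ≤ γ)
    (ha : |a| ≤ M) (hb : |b| ≤ M) :
    ‖(a * x + b * y) ^ γ * u‖ ≤ (2 * M) ^ γ * (‖x ^ γ * u‖ + ‖y ^ γ * u‖) := by
  have hM : 0 ≤ M := (abs_nonneg a).trans ha
  have hlin : |a * x + b * y| ≤ 2 * M * max x y := by
    calc |a * x + b * y| ≤ |a| * x + |b| * y := by
          simpa [abs_mul, abs_of_nonneg hx, abs_of_nonneg hy] using abs_add_le (a * x) (b * y)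
      _ ≤ M * max x y + M * max x y := by
          gcongr
          exacts [le_max_left x y, le_max_right x y]
      _ = 2 * M * max x y := by ring
  have hmax : max x y ^ γ ≤ x ^ γ + y ^ γ := by
    rcases le_total x y with h | h
    · rw [max_eq_right h]; exact le_add_of_nonneg_left (rpow_nonneg hx γ)
    · rw [max_eq_left h]; exact le_add_of_nonneg_right (rpow_nonneg hy γ)
  have hpow : |(a * x + b * y) ^ γ| ≤ (2 * M) ^ γ * (x ^ γ + y ^ γ) :=
    calc |(a * x + b * y) ^ γ| ≤ |a * x + b * y| ^ γ := abs_rpow_le_abs_rpow _ _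
      _ ≤ (2 * M * max x y) ^ γ := by gcongr
      _ = (2 * M) ^ γ * max x y ^ γ := mul_rpow (by positivity) (hx.trans (le_max_left x y))
      _ ≤ (2 * M) ^ γ * (x ^ γ + y ^ γ) := by gcongr
  simp only [norm_mul, Real.norm_eq_abs, abs_of_nonneg (rpow_nonneg hx γ),
    abs_of_nonneg (rpow_nonneg hy γ)]
  calc |(a * x + b * y) ^ γ| * |u| ≤ (2 * M) ^ γ * (x ^ γ + y ^ γ) * |u| := by gcongr
    _ = (2 * M) ^ γ * (x ^ γ * |u| + y ^ γ * |u|) := by ring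

section Mixture

variable {α : Type*} [MeasurableSpace α] {μ : Measure α} {f g w : α → ℝ} {γ : ℝ}

lemma integrable_mul_add_mul_rpow_mul (hfm : Measurable f) (hgm : Measurable g)
    (hwm : Measurable w) (hf : ∀ z, 0 ≤ f z) (hg : ∀ z, 0 ≤ g z) (hγ : 0 ≤ γ)
    (hfi : Integrable (fun z ↦ f z ^ γ * w z) μ) (hgi : Integrable (fun z ↦ g z ^ γ * w z) μ)
    (a b : ℝ) : Integrable (fun z ↦ (a * f z + b * g z) ^ γ * w z) μ :=
  Integrable.mono' ((hfi.norm.add hgi.norm).const_mul _) (by fun_prop)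
    (ae_of_all _ fun z ↦ (norm_mul_add_mul_rpow_mul_le (hf z) (hg z) hγ (le_max_left |a| |b|)
      (le_max_right |a| |b|)))

lemma continuous_integral_mul_add_mul_rpow_mul (hfm : Measurable f) (hgm : Measurable g)
    (hwm : Measurable w) (hf : ∀ z, 0 ≤ f z) (hg : ∀ z, 0 ≤ g z) (hγ : 0 ≤ γ)
    (hfi : Integrable (fun z ↦ f z ^ γ * w z) μ) (hgi : Integrable (fun z ↦ g z ^ γ * w z) μ) :
    Continuous (fun q : ℝ × ℝ ↦ ∫ z, (q.1 * f z + q.2 * g z) ^ γ * w z ∂μ) := by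
  refine continuous_iff_continuousAt.2 fun q₀ ↦ continuousAt_of_dominated
    (bound := fun z ↦ (2 * (‖q₀‖ + 1)) ^ γ * (‖f z ^ γ * w z‖ + ‖g z ^ γ * w z‖))
    (.of_forall fun q ↦ by fun_prop) ?_ ((hfi.norm.add hgi.norm).const_mul _)
    (ae_of_all _ fun z ↦ by fun_prop)
  filter_upwards [Metric.closedBall_mem_nhds q₀ one_pos] with q hq
  have hq' : ‖q‖ ≤ ‖q₀‖ + 1 := norm_le_of_mem_closedBall hq
  exact ae_of_all _ fun z ↦ norm_mul_add_mul_rpow_mul_le (hf z) (hg z) hγ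
    ((Real.norm_eq_abs _).symm.trans_le ((norm_fst_le q).trans hq'))
    ((Real.norm_eq_abs _).symm.trans_le ((norm_snd_le q).trans hq'))

lemma integral_mul_add_mul_rpow_mul_mono (hfm : Measurable f) (hgm : Measurable g)
    (hwm : Measurable w) (hf : ∀ z, 0 ≤ f z) (hg : ∀ z, 0 ≤ g z) (hw : ∀ z, 0 ≤ w z)
    (hγ : 0 ≤ γ) (hfi : Integrable (fun z ↦ f z ^ γ * w z) μ)
    (hgi : Integrable (fun z ↦ g z ^ γ * w z) μ) {a a' b b' : ℝ} (ha : 0 ≤ a) (hb : 0 ≤ b)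
    (haa' : a ≤ a') (hbb' : b ≤ b') :
    ∫ z, (a * f z + b * g z) ^ γ * w z ∂μ ≤ ∫ z, (a' * f z + b' * g z) ^ γ * w z ∂μ := by
  refine integral_mono (integrable_mul_add_mul_rpow_mul hfm hgm hwm hf hg hγ hfi hgi a b)
    (integrable_mul_add_mul_rpow_mul hfm hgm hwm hf hg hγ hfi hgi a' b') fun z ↦ ?_
  have := hf z; have := hg z; have := hw z
  gcongr

end Mixture

lemma integrable_exp_neg_mul_sum_sq_add {ι : Type*} [Fintype ι] {b : ℝ} (hb : 0 < b)
    (c : ι → ℝ) :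
    Integrable (fun v : ι → ℝ ↦ Real.exp (-b * ∑ i, v i ^ 2 + ∑ i, c i * v i)) := by
  convert (GaussianFourier.integrable_cexp_neg_mul_sum_add (b := (b : ℂ)) (by simpa using hb)
    (fun i ↦ (c i : ℂ))).norm using 2 with v
  rw [Complex.norm_exp]
  simp [← Complex.ofReal_pow]

lemma measurable_likelihood (d : ℕ) (T : ℝ) (ϑ : Fin d → ℝ) : Measurable (likelihood d T ϑ) := by
  unfold likelihood; fun_prop

lemma measurable_gaussDensity (d : ℕ) (T : ℝ) : Measurable (gaussDensity d T) := by
  unfold gaussDensity; fun_prop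

lemma gaussDensity_nonneg (d : ℕ) {T : ℝ} (hT : 0 < T) (z : Fin d → ℝ) :
    0 ≤ gaussDensity d T z := by
  unfold gaussDensity; positivity

lemma integrable_likelihood_rpow_mul_gaussDensity (d : ℕ) {T : ℝ} (hT : 0 < T) (γ : ℝ)
    (ϑ : Fin d → ℝ) :
    Integrable (fun z ↦ likelihood d T ϑ z ^ γ * gaussDensity d T z) := by
  have hexp : (fun z ↦ likelihood d T ϑ z ^ γ * gaussDensity d T z) = fun z ↦
      ((2 * π * T) ^ (-(d : ℝ) / 2) * Real.exp (-(∑ i, ϑ i ^ 2) * T / 2 * γ)) *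
        Real.exp (-(1 / (2 * T)) * ∑ i, z i ^ 2 + ∑ i, γ * ϑ i * z i) := by
    funext z
    have hlin : ∑ i, γ * ϑ i * z i = γ * ∑ i, z i * ϑ i := by
      rw [Finset.mul_sum]; exact Finset.sum_congr rfl fun i _ ↦ by ring
    simp only [likelihood, gaussDensity, ← Real.exp_mul, hlin]
    rw [mul_left_comm, ← Real.exp_add, mul_assoc _ (Real.exp _), ← Real.exp_add]
    congr 2
    field_simp
    ring
  rw [hexp]
  exact (integrable_exp_neg_mul_sum_sq_add (by positivity) _).const_mul _

lemma continuous_Gfun (d : ℕ) {T γ : ℝ} (hT : 0 < T) (hγ : 0 ≤ γ) (ϑb ϑl : Fin d → ℝ) :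
    Continuous (fun q : ℝ × ℝ ↦ Gfun d T γ ϑb ϑl q.1 q.2) :=
  continuous_integral_mul_add_mul_rpow_mul (measurable_likelihood d T ϑb)
    (measurable_likelihood d T ϑl) (measurable_gaussDensity d T) (fun _ ↦ (exp_pos _).le)
    (fun _ ↦ (exp_pos _).le) hγ (integrable_likelihood_rpow_mul_gaussDensity d hT γ ϑb)
    (integrable_likelihood_rpow_mul_gaussDensity d hT γ ϑl)

lemma Gfun_mono (d : ℕ) {T γ : ℝ} (hT : 0 < T) (hγ : 0 ≤ γ) (ϑb ϑl : Fin d → ℝ)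
    {a a' b b' : ℝ} (ha : 0 ≤ a) (hb : 0 ≤ b) (haa' : a ≤ a') (hbb' : b ≤ b') :
    Gfun d T γ ϑb ϑl a b ≤ Gfun d T γ ϑb ϑl a' b' :=
  integral_mul_add_mul_rpow_mul_mono (measurable_likelihood d T ϑb)
    (measurable_likelihood d T ϑl) (measurable_gaussDensity d T) (fun _ ↦ (exp_pos _).le)
    (fun _ ↦ (exp_pos _).le) (gaussDensity_nonneg d hT) hγ
    (integrable_likelihood_rpow_mul_gaussDensity d hT γ ϑb)
    (integrable_likelihood_rpow_mul_gaussDensity d hT γ ϑl) ha hb haa' hbb'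

section Constraint

variable {p Q x : ℝ}

lemma div_rpow_mul_self {c q : ℝ} (hc : 0 < c) (hq : 0 ≤ q) (Q : ℝ) :
    (q / c) ^ Q * c = q ^ Q * c ^ (1 - Q) := by
  rw [div_rpow hq hc.le, rpow_sub hc, rpow_one, div_mul_eq_mul_div, mul_div_assoc]

lemma hAdj_base_nonneg (hp1 : p < 1) (hx : x ^ Q * p ^ (1 - Q) ≤ 1) :
    0 ≤ (1 - x ^ Q * p ^ (1 - Q)) / (1 - p) ^ (1 - Q) :=
  div_nonneg (sub_nonneg.2 hx) (rpow_nonneg (sub_nonneg.2 hp1.le) _)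

lemma hAdj_nonneg (hp1 : p < 1) (hx : x ^ Q * p ^ (1 - Q) ≤ 1) : 0 ≤ hAdj p Q x :=
  rpow_nonneg (hAdj_base_nonneg hp1 hx) _

lemma hAdj_rpow (hp1 : p < 1) (hQ : Q ≠ 0) (hx : x ^ Q * p ^ (1 - Q) ≤ 1) :
    hAdj p Q x ^ Q = (1 - x ^ Q * p ^ (1 - Q)) / (1 - p) ^ (1 - Q) := by
  rw [hAdj, ← rpow_mul (hAdj_base_nonneg hp1 hx), one_div_mul_cancel hQ, rpow_one]

lemma hAdj_eq_zero (hQ : Q ≠ 0) (hx : x ^ Q * p ^ (1 - Q) = 1) : hAdj p Q x = 0 := by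
  rw [hAdj, hx, sub_self, zero_div, zero_rpow (one_div_ne_zero hQ)]

lemma continuous_hAdj (hQ : 0 < Q) : Continuous (hAdj p Q) := by
  unfold hAdj
  exact (continuous_rpow_const (by positivity)).comp
    ((continuous_const.sub ((continuous_rpow_const hQ.le).mul continuous_const)).div_const _)

lemma constraint_hAdj (hp0 : 0 < p) (hp1 : p < 1) (hQ : Q ≠ 0) (hx0 : 0 ≤ x)
    (hx : x ^ Q * p ^ (1 - Q) ≤ 1) :
    (x / p) ^ Q * p + (hAdj p Q x / (1 - p)) ^ Q * (1 - p) = 1 := by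
  have hD : 0 < (1 - p) ^ (1 - Q) := rpow_pos_of_pos (sub_pos.2 hp1) _
  rw [div_rpow_mul_self hp0 hx0, div_rpow_mul_self (sub_pos.2 hp1) (hAdj_nonneg hp1 hx),
    hAdj_rpow hp1 hQ hx, div_mul_cancel₀ _ hD.ne']
  ring

lemma hAdj_le_of_constraint {q₁ q₂ : ℝ} (hp0 : 0 < p) (hp1 : p < 1) (hQ : 0 < Q)
    (hq₁ : 0 ≤ q₁) (hq₂ : 0 ≤ q₂) (hx : q₁ ^ Q * p ^ (1 - Q) ≤ 1)
    (hc : 1 ≤ (q₁ / p) ^ Q * p + (q₂ / (1 - p)) ^ Q * (1 - p)) :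
    hAdj p Q q₁ ≤ q₂ := by
  have hD : 0 < (1 - p) ^ (1 - Q) := rpow_pos_of_pos (sub_pos.2 hp1) _
  rw [div_rpow_mul_self hp0 hq₁, div_rpow_mul_self (sub_pos.2 hp1) hq₂] at hc
  rw [← rpow_le_rpow_iff (hAdj_nonneg hp1 hx) hq₂ hQ, hAdj_rpow hp1 hQ.ne' hx,
    div_le_iff₀ hD]
  linarith

lemma rpow_mul_le_one_of_le {B c : ℝ} (hQ : 0 ≤ Q) (hc : 0 ≤ c) (hB : B ^ Q * c = 1)
    (hx0 : 0 ≤ x) (hxB : x ≤ B) : x ^ Q * c ≤ 1 :=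
  hB ▸ by gcongr

lemma exists_mem_Icc_le_hAdj_le {B q₁ q₂ : ℝ} (hp0 : 0 < p) (hp1 : p < 1) (hQ : 0 < Q)
    (hB0 : 0 ≤ B) (hB : B ^ Q * p ^ (1 - Q) = 1) (hq₁ : 0 ≤ q₁) (hq₂ : 0 ≤ q₂)
    (hc : 1 ≤ (q₁ / p) ^ Q * p + (q₂ / (1 - p)) ^ Q * (1 - p)) :
    ∃ x ∈ Set.Icc 0 B, x ≤ q₁ ∧ hAdj p Q x ≤ q₂ := by
  by_cases hq₁B : q₁ ≤ B
  · exact ⟨q₁, ⟨hq₁, hq₁B⟩, le_rfl, hAdj_le_of_constraint hp0 hp1 hQ hq₁ hq₂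
      (rpow_mul_le_one_of_le hQ.le (rpow_nonneg hp0.le _) hB hq₁ hq₁B) hc⟩
  · exact ⟨B, ⟨hB0, le_rfl⟩, (not_le.1 hq₁B).le, (hAdj_eq_zero hQ.ne' hB).trans_le hq₂⟩

end Constraint

lemma pos_of_one_div_add_one_div_eq_one {P Q : ℝ} (hP : P < 0) (hPQ : 1 / P + 1 / Q = 1) :
    0 < Q :=
  one_div_pos.1 (by linarith [one_div_neg.2 hP])

lemma rpow_one_div_rpow_mul_rpow_one_sub {p P Q : ℝ} (hp : 0 < p) (hQ : Q ≠ 0)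
    (hPQ : 1 / P + 1 / Q = 1) : (p ^ (1 / P)) ^ Q * p ^ (1 - Q) = 1 := by
  have h1P : 1 / P = 1 - 1 / Q := by linarith
  rw [← rpow_mul hp.le, ← rpow_add hp, h1P, sub_mul, one_div_mul_cancel hQ]
  simp

theorem stmt_18_general (d : ℕ) (T : ℝ) (hT : 0 < T) (γ : ℝ) (hγ : 0 < γ)
    (ϑb ϑl : Fin d → ℝ) (p : ℝ) (hp0 : 0 < p) (hp1 : p < 1)
    (P Q : ℝ) (hP : P < 0) (hPQ : 1 / P + 1 / Q = 1) :
    sInf {r : ℝ | ∃ q₁ q₂ : ℝ, 0 ≤ q₁ ∧ 0 ≤ q₂ ∧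
          1 ≤ (q₁ / p) ^ Q * p + (q₂ / (1 - p)) ^ Q * (1 - p) ∧
          r = Gfun d T γ ϑb ϑl q₁ q₂}
      = sInf {r : ℝ | ∃ q₁ : ℝ, 0 ≤ q₁ ∧ q₁ ≤ p ^ (1 / P) ∧
          r = Gfun d T γ ϑb ϑl q₁ (hAdj p Q q₁)} ∧
    ∃ q₁star : ℝ, 0 ≤ q₁star ∧ q₁star ≤ p ^ (1 / P) ∧
      IsLeast {r : ℝ | ∃ q₁ q₂ : ℝ, 0 ≤ q₁ ∧ 0 ≤ q₂ ∧
          1 ≤ (q₁ / p) ^ Q * p + (q₂ / (1 - p)) ^ Q * (1 - p) ∧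
          r = Gfun d T γ ϑb ϑl q₁ q₂}
        (Gfun d T γ ϑb ϑl q₁star (hAdj p Q q₁star)) ∧
      (q₁star / p) ^ Q * p + (hAdj p Q q₁star / (1 - p)) ^ Q * (1 - p) = 1 := by
  have hQ := pos_of_one_div_add_one_div_eq_one hP hPQ
  have hB := rpow_one_div_rpow_mul_rpow_one_sub hp0 hQ.ne' hPQ
  set B := p ^ (1 / P)
  have hB0 : 0 ≤ B := rpow_nonneg hp0.le _
  have hcurve (x : ℝ) (hx : x ∈ Set.Icc 0 B) : x ^ Q * p ^ (1 - Q) ≤ 1 :=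
    rpow_mul_le_one_of_le hQ.le (rpow_nonneg hp0.le _) hB hx.1 hx.2
  obtain ⟨x₀, hx₀, hmin⟩ := isCompact_Icc.exists_isMinOn (Set.nonempty_Icc.2 hB0)
    ((continuous_Gfun d hT hγ.le ϑb ϑl).comp
      (continuous_id.prodMk (continuous_hAdj hQ))).continuousOn
  have hleast_curve : IsLeast {r : ℝ | ∃ q₁ : ℝ, 0 ≤ q₁ ∧ q₁ ≤ B ∧
      r = Gfun d T γ ϑb ϑl q₁ (hAdj p Q q₁)} (Gfun d T γ ϑb ϑl x₀ (hAdj p Q x₀)) :=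
    ⟨⟨x₀, hx₀.1, hx₀.2, rfl⟩, by rintro _ ⟨x, hx0, hxB, rfl⟩; exact hmin ⟨hx0, hxB⟩⟩
  have hleast : IsLeast {r : ℝ | ∃ q₁ q₂ : ℝ, 0 ≤ q₁ ∧ 0 ≤ q₂ ∧
      1 ≤ (q₁ / p) ^ Q * p + (q₂ / (1 - p)) ^ Q * (1 - p) ∧
      r = Gfun d T γ ϑb ϑl q₁ q₂} (Gfun d T γ ϑb ϑl x₀ (hAdj p Q x₀)) := by
    refine ⟨⟨x₀, hAdj p Q x₀, hx₀.1, hAdj_nonneg hp1 (hcurve x₀ hx₀),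
      (constraint_hAdj hp0 hp1 hQ.ne' hx₀.1 (hcurve x₀ hx₀)).ge, rfl⟩, ?_⟩
    rintro _ ⟨q₁, q₂, hq₁, hq₂, hc, rfl⟩
    obtain ⟨x, hx, hxq₁, hhq₂⟩ := exists_mem_Icc_le_hAdj_le hp0 hp1 hQ hB0 hB hq₁ hq₂ hc
    exact (hmin hx).trans
      (Gfun_mono d hT hγ.le ϑb ϑl hx.1 (hAdj_nonneg hp1 (hcurve x hx)) hxq₁ hhq₂)
  exact ⟨hleast.csInf_eq.trans hleast_curve.csInf_eq.symm, x₀, hx₀.1, hx₀.2, hleast,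
    constraint_hAdj hp0 hp1 hQ.ne' hx₀.1 (hcurve x₀ hx₀)⟩

/-- Adjusted-prior optimization in the opposite-signs case `P = λ/α < 0` (conjugate
`0 < Q < 1`): the infimum of `G` over the feasible set
`{q₁, q₂ ≥ 0, (q₁/p)^Q p + (q₂/(1-p))^Q (1-p) ≥ 1}` equals the infimum of
`q₁ ↦ G(q₁, h(q₁))` over `q₁ ∈ [0, p^{1/P}]`, and there is `q₁* ∈ [0, p^{1/P}]` such that
`(q₁*, h(q₁*))` attains the infimum, the constraint holding there with equality. -/
theorem stmt_18 (d : ℕ) (hd : 1 ≤ d) (T : ℝ) (hT : 0 < T) (γ : ℝ) (hγ : 0 < γ)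
    (ϑb ϑl : Fin d → ℝ) (p : ℝ) (hp0 : 0 < p) (hp1 : p < 1)
    (P Q : ℝ) (hP : P < 0) (hPQ : 1 / P + 1 / Q = 1) :
    sInf {r : ℝ | ∃ q₁ q₂ : ℝ, 0 ≤ q₁ ∧ 0 ≤ q₂ ∧
          1 ≤ (q₁ / p) ^ Q * p + (q₂ / (1 - p)) ^ Q * (1 - p) ∧
          r = Gfun d T γ ϑb ϑl q₁ q₂}
      = sInf {r : ℝ | ∃ q₁ : ℝ, 0 ≤ q₁ ∧ q₁ ≤ p ^ (1 / P) ∧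
          r = Gfun d T γ ϑb ϑl q₁ (hAdj p Q q₁)} ∧
    ∃ q₁star : ℝ, 0 ≤ q₁star ∧ q₁star ≤ p ^ (1 / P) ∧
      IsLeast {r : ℝ | ∃ q₁ q₂ : ℝ, 0 ≤ q₁ ∧ 0 ≤ q₂ ∧
          1 ≤ (q₁ / p) ^ Q * p + (q₂ / (1 - p)) ^ Q * (1 - p) ∧
          r = Gfun d T γ ϑb ϑl q₁ q₂}
        (Gfun d T γ ϑb ϑl q₁star (hAdj p Q q₁star)) ∧
      (q₁star / p) ^ Q * p + (hAdj p Q q₁star / (1 - p)) ^ Q * (1 - p) = 1 :=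
  stmt_18_general d T hT γ hγ ϑb ϑl p hp0 hp1 P Q hP hPQ
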